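/- For every n ≥ 2 and 2 ≤ i ≤ n, the identity Σ_{k=i-2}^{n-2} C(n-2,k) · F(i-2,k) · (i-1) · (2n-2k-5)!! = (i-1)·(2n-i-2)!/(2(n-i))!! holds, where F(m,m) = m! and F(m,k) = (2k-m-1)!·m/((k-m)!·2^(k-m)) for k > m (and F(0,0)=1, with the convention that the term for k with F undefined is the k=i-2 boundary term (i-2)! when i ≥ 2). -/

import Mathlib

/-!
Write `i = m + 2`, `n = m + 2 + M` and `k = m + j`, `r = M - j`. The forest count is
`F(m, m + j) = b(m, j) (m + j)! / 2 ^ j` with the ballot numbers `b(m, j) = m / (m + 2j) · C(m + 2j, j)`,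
and the tree count is `(2r - 1)‼ = (2r)! / (2 ^ r r!)`. After these substitutions every summand is
`(m + M)! / 2 ^ M · b(m, j) C(2r, r)`, so the identity reduces to the convolution
`∑_{j + r = M} b(m, j) C(2r, r) = C(2M + m, M)`, which follows by induction on `M` and `m` from
the recurrence `b(m + 1, j + 1) = b(m, j + 1) + b(m + 2, j)` and Pascal's rule.
-/

/-- Plane binary trees with ℕ-labeled leaves. -/
inductive BTree : Type
  | leaf : ℕ → BTree
  | node : BTree → BTree → BTree

namespace BTree

/-- Multiset of leaf labels. -/
def leaves : BTree → Multiset ℕ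
  | leaf i => {i}
  | node l r => leaves l + leaves r

/-- Depth of the leaf labeled `i` (junk if `i` is not a leaf label). -/
def dep : BTree → ℕ → ℕ
  | leaf _, _ => 0
  | node l r, i => if i ∈ leaves l then dep l i + 1 else dep r i + 1

/-- Path length (number of edges) between the leaves labeled `i` and `j`. -/
def dist : BTree → ℕ → ℕ → ℕ
  | leaf _, _, _ => 0
  | node l r, i, j =>
    if i ∈ leaves l ∧ j ∈ leaves l then dist l i j
    else if i ∈ leaves r ∧ j ∈ leaves r then dist r i j
    else (if i ∈ leaves l then dep l i + 1 else dep r i + 1)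
       + (if j ∈ leaves l then dep l j + 1 else dep r j + 1)

/-- Isomorphism of leaf-labeled binary trees: generated by swapping the two
children of any node, preserving leaf labels. -/
inductive Iso : BTree → BTree → Prop
  | leaf (i : ℕ) : Iso (leaf i) (leaf i)
  | node {l r l' r'} : Iso l l' → Iso r r' → Iso (node l r) (node l' r')
  | swap {l r l' r'} : Iso l r' → Iso r l' → Iso (node l r) (node l' r')

end BTree

/-- A valid fully resolved rooted phylogenetic tree on the leaf set {1,…,n}:
the multiset of leaf labels is exactly {1,…,n} (each label occurring once). -/
def BTree.valid (n : ℕ) (t : BTree) : Prop := t.leaves = (Finset.Icc 1 n).val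

/-- The type of fully resolved rooted phylogenetic trees on {1,…,n}, up to
label-preserving isomorphism. -/
def PhyloTree (n : ℕ) : Type :=
  Quot (fun a b : {t : BTree // t.valid n} => BTree.Iso a.1 b.1)

/-- The path length between leaves `i` and `j` of a phylogenetic tree,
computed on a representative. -/
noncomputable def pdist {n : ℕ} (T : PhyloTree n) (i j : ℕ) : ℕ :=
  BTree.dist T.out.1 i j

/-- Double factorial: `df n = n‼`. -/
def df : ℕ → ℕ
  | 0 => 1
  | 1 => 1
  | n + 2 => (n + 2) * df n

/-- Rising factorial (Pochhammer symbol) `(a)_k = a(a+1)⋯(a+k-1)`. -/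
def rf (a : ℝ) : ℕ → ℝ
  | 0 => 1
  | k + 1 => rf a k * (a + k)

/-- Number of ordered m-forests on k labeled leaves (as a rational number). -/
noncomputable def forestCount (m k : ℕ) : ℚ :=
  if k = m then Nat.factorial m
  else (Nat.factorial (2 * k - m - 1) : ℚ) * m /
    ((Nat.factorial (k - m) : ℚ) * 2 ^ (k - m))

/-- Number of binary rooted phylogenetic trees with m labeled leaves,
i.e. the interpretation of (2m-3)‼ with value 1 for m ≤ 1. -/
def treeCount (m : ℕ) : ℕ := if m ≤ 1 then 1 else df (2 * m - 3)

open Finset Nat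

lemma df_eq_doubleFactorial : ∀ n : ℕ, df n = n‼
  | 0 => rfl
  | 1 => rfl
  | n + 2 => by rw [df, doubleFactorial_add_two, df_eq_doubleFactorial n]

lemma treeCount_succ (r : ℕ) : treeCount (r + 1) = (2 * r - 1)‼ := by
  rcases r with _ | r
  · rfl
  · rw [treeCount, if_neg (by omega), df_eq_doubleFactorial]
    congr 1

lemma factorial_two_mul_eq_mul_treeCount (r : ℕ) : (2 * r)! = 2 ^ r * r ! * treeCount (r + 1) := by
  rcases r with _ | r
  · rfl
  · rw [treeCount_succ, ← doubleFactorial_two_mul, show 2 * (r + 1) = 2 * r + 1 + 1 by ring,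
      factorial_eq_mul_doubleFactorial, show 2 * r + 1 + 1 - 1 = 2 * r + 1 by omega]

/-- `ballot m j = m / (m + 2j) · C(m + 2j, j)`, the coefficient of `x ^ j` in `c(x) ^ m` for the
Catalan series `c`. -/
def ballot : ℕ → ℕ → ℚ
  | _, 0 => 1
  | m, j + 1 => m * (m + 2 * j + 1)! / ((j + 1)! * (m + j + 1)!)

@[simp] lemma ballot_zero_right (m : ℕ) : ballot m 0 = 1 := rfl

@[simp] lemma ballot_zero_succ (j : ℕ) : ballot 0 (j + 1) = 0 := by simp [ballot]

lemma ballot_add_two (m j : ℕ) :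
    ballot (m + 2) j = (m + 2) * (m + 2 * j + 1)! / (j ! * (m + j + 2)!) := by
  rcases j with _ | j
  · simp only [ballot, factorial_succ (m + 1), factorial_zero]
    push_cast
    field_simp
    ring
  · simp only [ballot]
    push_cast
    ring_nf

lemma ballot_succ_succ (m j : ℕ) : ballot (m + 1) (j + 1) = ballot m (j + 1) + ballot (m + 2) j := by
  rw [ballot_add_two]
  simp only [ballot, show m + 1 + 2 * j + 1 = (m + 2 * j + 1) + 1 by omega,
    show m + 1 + j + 1 = (m + j + 1) + 1 by omega, factorial_succ (m + 2 * j + 1),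
    factorial_succ (m + j + 1), factorial_succ j]
  push_cast
  field_simp
  ring

/-- Coefficientwise form of `c(x) ^ m / √(1 - 4x) = ∑ C(2M + m, M) x ^ M`. -/
theorem sum_antidiagonal_ballot_mul_centralBinom (M m : ℕ) :
    ∑ p ∈ antidiagonal M, ballot m p.1 * (p.2.centralBinom : ℚ) = (2 * M + m).choose M := by
  induction M generalizing m with
  | zero => simp
  | succ M ih =>
    induction m with
    | zero => simp [Finset.Nat.sum_antidiagonal_succ, centralBinom_eq_two_mul_choose]
    | succ m ihm =>
      rw [Finset.Nat.sum_antidiagonal_succ] at ihm ⊢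
      simp only [ballot_succ_succ, add_mul, sum_add_distrib, ballot_zero_right, ← add_assoc] at ihm ⊢
      rw [ihm, ih, choose_succ_succ', show 2 * M + (m + 2) = 2 * (M + 1) + m by ring]
      push_cast
      ring

lemma forestCount_self_add (m j : ℕ) : forestCount m (m + j) = ballot m j * (m + j)! / 2 ^ j := by
  rcases j with _ | j
  · simp [forestCount]
  · rw [← add_assoc, forestCount, if_neg (by omega),
      show 2 * (m + j + 1) - m - 1 = m + 2 * j + 1 by omega, show m + j + 1 - m = j + 1 by omega,
      ballot]
    field_simp

lemma cast_treeCount_succ (r : ℕ) : (treeCount (r + 1) : ℚ) = (2 * r)! / (2 ^ r * r !) := by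
  rw [factorial_two_mul_eq_mul_treeCount]
  push_cast
  field_simp

lemma choose_mul_forestCount_mul_treeCount (m j r : ℕ) :
    ((m + (j + r)).choose (m + j) : ℚ) * forestCount m (m + j) * treeCount (r + 1)
      = (m + (j + r))! / 2 ^ (j + r) * (ballot m j * r.centralBinom) := by
  rw [forestCount_self_add, cast_treeCount_succ, cast_choose ℚ (by omega : m + j ≤ m + (j + r)),
    show m + (j + r) - (m + j) = r by omega, centralBinom_eq_two_mul_choose,
    cast_choose ℚ (by omega : r ≤ 2 * r), show 2 * r - r = r by omega]
  field_simp
  ring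

theorem sum_antidiagonal_choose_mul_forestCount_mul_treeCount (m M : ℕ) :
    ∑ p ∈ antidiagonal M,
        ((m + M).choose (m + p.1) : ℚ) * forestCount m (m + p.1) * treeCount (p.2 + 1)
      = (m + 2 * M)! / (2 ^ M * M !) := calc
  _ = ∑ p ∈ antidiagonal M, (m + M)! / 2 ^ M * (ballot m p.1 * p.2.centralBinom : ℚ) :=
    sum_congr rfl fun p hp => by
      rw [← mem_antidiagonal.mp hp]
      exact choose_mul_forestCount_mul_treeCount m p.1 p.2
  _ = (m + M)! / 2 ^ M * (2 * M + m).choose M := by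
    rw [← mul_sum, sum_antidiagonal_ballot_mul_centralBinom]
  _ = (m + 2 * M)! / (2 ^ M * M !) := by
    rw [cast_choose ℚ (by omega : M ≤ 2 * M + m), show 2 * M + m - M = m + M by omega,
      show 2 * M + m = m + 2 * M by omega]
    field_simp

theorem stmt16_general (n i : ℕ) (hi2 : 2 ≤ i) (hin : i ≤ n) :
    ∑ k ∈ Finset.Icc (i - 2) (n - 2),
        (Nat.choose (n - 2) k : ℚ) * forestCount (i - 2) k *
          ((i : ℚ) - 1) * (treeCount (n - k - 1) : ℚ)
      = ((i : ℚ) - 1) * (Nat.factorial (2 * n - i - 2) : ℚ) /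
          (df (2 * (n - i)) : ℚ) := by
  obtain ⟨m, rfl⟩ : ∃ m, i = m + 2 := ⟨i - 2, by omega⟩
  obtain ⟨M, rfl⟩ : ∃ M, n = m + 2 + M := ⟨n - (m + 2), by omega⟩
  have hsum : ∑ k ∈ Icc m (m + M),
        ((m + M).choose k : ℚ) * forestCount m k * (((m + 2 : ℕ) : ℚ) - 1)
          * treeCount (m + 2 + M - k - 1)
      = (m + 1) * ∑ p ∈ antidiagonal M,
        ((m + M).choose (m + p.1) : ℚ) * forestCount m (m + p.1) * treeCount (p.2 + 1) := by
    rw [Finset.Nat.sum_antidiagonal_eq_sum_range_succ_mk, mul_sum, ← Ico_add_one_right_eq_Icc,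
      sum_Ico_eq_sum_range, show m + M + 1 - m = M + 1 by omega]
    refine sum_congr rfl fun j hj => ?_
    rw [show m + 2 + M - (m + j) - 1 = M - j + 1 by grind]
    push_cast
    ring
  rw [show m + 2 - 2 = m by omega, show m + 2 + M - 2 = m + M by omega, hsum,
    sum_antidiagonal_choose_mul_forestCount_mul_treeCount, show m + 2 + M - (m + 2) = M by omega,
    show 2 * (m + 2 + M) - (m + 2) - 2 = m + 2 * M by omega, df_eq_doubleFactorial,
    doubleFactorial_two_mul]
  push_cast
  ring

/-- the decomposition identity
Σ_{k=i-2}^{n-2} C(n-2,k)·F(i-2,k)·(i-1)·(2n-2k-5)‼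
  = (i-1)·(2n-i-2)!/(2(n-i))‼. -/
theorem stmt16 (n i : ℕ) (hn : 2 ≤ n) (hi2 : 2 ≤ i) (hin : i ≤ n) :
    ∑ k ∈ Finset.Icc (i - 2) (n - 2),
        (Nat.choose (n - 2) k : ℚ) * forestCount (i - 2) k *
          ((i : ℚ) - 1) * (treeCount (n - k - 1) : ℚ)
      = ((i : ℚ) - 1) * (Nat.factorial (2 * n - i - 2) : ℚ) /
          (df (2 * (n - i)) : ℚ) :=
  stmt16_general n i hi2 hin
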